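/- arXiv:1801.04605 — 3 statements merged into one kernel-verified Lean document; each statement's English description precedes it below -/
import Mathlib

section
/- Let p be a prime and let R be a field of characteristic p in which x^3 - x^2 - x - 1 has roots α, β, γ satisfying the symmetric function relations α+β+γ = 1, αβ+αγ+βγ = -1, αβγ = 1. If α^p = β, β^p = α, γ^p = γ in R, and α^p(β-γ) - β^p(α-γ) + γ^p(α-β) = 0, and α ≠ β in R, then p divides 38. -/
/-- If in a field of characteristic p the roots α, β, γ of x³-x²-x-1 satisfy the
symmetric relations, Frobenius swaps α and β and fixes γ, and the alternating
expression vanishes, then p divides 38. -/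
theorem dvd_thirtyeight_of_frobenius_swap
    (p : ℕ) (hp : p.Prime) (R : Type*) [Field R] [CharP R p]
    (α β γ : R)
    (hroot₁ : α ^ 3 = α ^ 2 + α + 1) (hroot₂ : β ^ 3 = β ^ 2 + β + 1)
    (hroot₃ : γ ^ 3 = γ ^ 2 + γ + 1)
    (hsum : α + β + γ = 1) (hsym : α * β + α * γ + β * γ = -1)
    (hprod : α * β * γ = 1)
    (hfα : α ^ p = β) (hfβ : β ^ p = α) (hfγ : γ ^ p = γ)
    (hexpr : α ^ p * (β - γ) - β ^ p * (α - γ) + γ ^ p * (α - β) = 0)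
    (hαβ : α ≠ β) :
    p ∣ 38 := by
  rw [hfα, hfβ, hfγ] at hexpr
  have h1 : (α - β) * (α + β - 2 * γ) = 0 := by linear_combination -hexpr
  have h2 : α + β - 2 * γ = 0 := by
    rcases mul_eq_zero.mp h1 with h | h
    · exact absurd (sub_eq_zero.mp h) hαβ
    · exact h
  have h3 : 3 * γ = 1 := by linear_combination hsum - h2
  have h38 : (38 : R) = 0 := by
    linear_combination (-27) * hroot₃ + (9 * γ ^ 2 - 6 * γ - 11) * h3
  exact (CharP.cast_eq_zero_iff R p 38).mp (by exact_mod_cast h38)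
end

section
/- For a prime p ≠ 11, 19, if x^3 - x^2 - x - 1 has three distinct roots in 𝔽_p, then p divides the Tribonacci number T_{p-1}. -/
/-- The Tribonacci sequence: T₀ = 0, T₁ = 1, T₂ = 1, T_{n+3} = T_{n+2} + T_{n+1} + T_n. -/
def trib : ℕ → ℕ
  | 0 => 0
  | 1 => 1
  | 2 => 1
  | n + 3 => trib (n + 2) + trib (n + 1) + trib n

/-- For p prime, p ≠ 11, 19: if x³-x²-x-1 has three distinct roots mod p,
then p divides T_{p-1}. -/
theorem dvd_trib_of_three_distinct_roots
    (p : ℕ) (hp : p.Prime) (hp11 : p ≠ 11) (hp19 : p ≠ 19)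
    (h : ∃ a b c : ZMod p, a ≠ b ∧ a ≠ c ∧ b ≠ c ∧
      a ^ 3 = a ^ 2 + a + 1 ∧ b ^ 3 = b ^ 2 + b + 1 ∧ c ^ 3 = c ^ 2 + c + 1) :
    p ∣ trib (p - 1) := by
  haveI : Fact p.Prime := ⟨hp⟩
  obtain ⟨a, b, c, hab, hac, hbc, ha, hb, hc⟩ := h
  set δ : ZMod p := (a - b) * (a - c) * (b - c) with hδ
  have key : ∀ n : ℕ, δ * (trib n : ZMod p)
      = a ^ (n + 1) * (b - c) - b ^ (n + 1) * (a - c) + c ^ (n + 1) * (a - b) := by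
    have H : ∀ n : ℕ,
        (δ * (trib n : ZMod p)
          = a ^ (n + 1) * (b - c) - b ^ (n + 1) * (a - c) + c ^ (n + 1) * (a - b)) ∧
        (δ * (trib (n + 1) : ZMod p)
          = a ^ (n + 2) * (b - c) - b ^ (n + 2) * (a - c) + c ^ (n + 2) * (a - b)) ∧
        (δ * (trib (n + 2) : ZMod p)
          = a ^ (n + 3) * (b - c) - b ^ (n + 3) * (a - c) + c ^ (n + 3) * (a - b)) := by
      intro n
      induction n with
      | zero =>
        refine ⟨?_, ?_, ?_⟩
        · simp [trib]; ring
        · simp only [trib, Nat.cast_one, mul_one, hδ]; ring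
        · simp only [trib, Nat.cast_one, mul_one, hδ]
          linear_combination (c - b) * ha + (a - c) * hb + (b - a) * hc
      | succ k ih =>
        refine ⟨ih.2.1, ih.2.2, ?_⟩
        have : trib (k + 3) = trib (k + 2) + trib (k + 1) + trib k := rfl
        rw [this]
        push_cast
        rw [mul_add, mul_add, ih.1, ih.2.1, ih.2.2]
        linear_combination (a ^ (k + 1) * (c - b)) * ha + (b ^ (k + 1) * (a - c)) * hb
          + (c ^ (k + 1) * (b - a)) * hc
    exact fun n => (H n).1
  have hp1 : p - 1 + 1 = p := Nat.succ_pred_eq_of_pos hp.pos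
  have h0 : δ * (trib (p - 1) : ZMod p) = 0 := by
    rw [key (p - 1), hp1, ZMod.pow_card, ZMod.pow_card, ZMod.pow_card]
    ring
  have hδ0 : δ ≠ 0 :=
    mul_ne_zero (mul_ne_zero (sub_ne_zero.mpr hab) (sub_ne_zero.mpr hac)) (sub_ne_zero.mpr hbc)
  have := (mul_eq_zero.mp h0).resolve_left hδ0
  exact (ZMod.natCast_eq_zero_iff _ _).mp this
end

section
/- For a prime p ∉ {2, 11, 19}, if p divides the Tribonacci number T_{p-1}, then the polynomial x^3 - x^2 - x - 1 splits into three distinct linear factors over 𝔽_p. -/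
open Polynomial

/-- In the transposition case, the Frobenius relation forces `836 = 0`. -/
private lemma no_trans {K : Type} [Field K] (h836 : (836 : K) ≠ 0) (x y z : K)
    (hfx : x ^ 3 - x ^ 2 - x - 1 = 0)
    (h1 : x + y + z = 1) (h2 : x * y + x * z + y * z = -1) (h3 : x * y * z = 1)
    (hW : (3*y^2 - 2*y - 1) * (3*z^2 - 2*z - 1) * x + (3*z^2 - 2*z - 1) * (3*x^2 - 2*x - 1) * z
        + (3*x^2 - 2*x - 1) * (3*y^2 - 2*y - 1) * y = 0) : False := by
  have hg : (-9:K)*x^7 + 27*x^6 - 26*x^5 + 32*x^4 - 23*x^3 + 5*x^2 + 14*x = 0 := by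
    linear_combination (x^2) * hW - ((9:K)*x^6 + (-9:K)*x^5*y + (-9:K)*x^5*z + (-18:K)*x^5 + (9:K)*x^4*y^2 + (18:K)*x^4*y*z + (9:K)*x^4*y + (9:K)*x^4*z^2 + (9:K)*x^4*z + (8:K)*x^4 + (-27:K)*x^3*y^2*z + (-6:K)*x^3*y^2 + (-27:K)*x^3*y*z^2 + (-2:K)*x^3*y + (-6:K)*x^3*z^2 + (-2:K)*x^3*z + (-24:K)*x^3 + (27:K)*x^2*y^3*z + (63:K)*x^2*y^2*z^2 + (-27:K)*x^2*y^2*z + (-3:K)*x^2*y^2 + (27:K)*x^2*y*z^3 + (-27:K)*x^2*y*z^2 + (8:K)*x^2*y*z + (26:K)*x^2*y + (-3:K)*x^2*z^2 + (26:K)*x^2*z + (-27:K)*x*y^4*z + (-90:K)*x*y^3*z^2 + (54:K)*x*y^3*z + (-90:K)*x*y^2*z^3 + (117:K)*x*y^2*z^2 + (-32:K)*x*y^2*z + (-27:K)*x*y^2 + (-27:K)*x*y*z^4 + (54:K)*x*y*z^3 + (-32:K)*x*y*z^2 + (-44:K)*x*y*z + (27:K)*x*y + (-27:K)*x*z^2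 + (27:K)*x*z + (-5:K)*x + (-27:K)*y^4*z^2 + (-90:K)*y^3*z^3 + (54:K)*y^3*z^2 + (-27:K)*y^3*z + (-63:K)*y^2*z^4 + (90:K)*y^2*z^3 + (-149:K)*y^2*z^2 + (27:K)*y^2*z + (-63:K)*y*z^3 + (27:K)*y*z^2 + (-32:K)*y*z + (-27:K)*y + (-36:K)*z^3 + (36:K)*z^2 + (-27:K)*z + (-19:K)) * h1 - ((27:K)*y^4*z + (117:K)*y^3*z^2 + (-81:K)*y^3*z + (153:K)*y^2*z^3 + (-234:K)*y^2*z^2 + (113:K)*y^2*z + (27:K)*y^2 + (63:K)*y*z^4 + (-153:K)*y*z^3 + (149:K)*y*z^2 + (31:K)*y*z + (-54:K)*y + (63:K)*z^2 + (-90:K)*z + (59:K)) * h2 - ((-36:K)*y*z^3 + (36:K)*y*z^2 + (68:K)*y*z + (-46:K)*y + (-36:K)*z^4 + (72:K)*z^3 + (-82:K)*z + (78:K)) * h3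
  apply h836
  linear_combination ((-162:K)*x^8 + 324*x^7 + 216*x^6 - 477*x^5 + 653*x^4 - 687*x^3 + 309*x^2
      + 682*x - 836) * hfx + ((-18:K)*x^4 + 58*x^2 + 15*x - 11) * hg

/-- In the 3-cycle case, the Frobenius relation forces `704 = 0`. -/
private lemma no_cycle {K : Type} [Field K] (h704 : (704 : K) ≠ 0) (x y z : K)
    (h1 : x + y + z = 1) (h2 : x * y + x * z + y * z = -1) (h3 : x * y * z = 1)
    (hZ : (3*y^2 - 2*y - 1) * (3*z^2 - 2*z - 1) * y + (3*z^2 - 2*z - 1) * (3*x^2 - 2*x - 1) * z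
        + (3*x^2 - 2*x - 1) * (3*y^2 - 2*y - 1) * x = 0) : False := by
  apply h704
  linear_combination ((3*y^2 - 2*y - 1) * (3*z^2 - 2*z - 1) * z
      + (3*z^2 - 2*z - 1) * (3*x^2 - 2*x - 1) * x
      + (3*x^2 - 2*x - 1) * (3*y^2 - 2*y - 1) * y) * hZ - ((81:K)*x^5*y^2*z^2 + (-54:K)*x^5*y^2*z + (-27:K)*x^5*y^2 + (-54:K)*x^5*y*z^2 + (36:K)*x^5*y*z + (18:K)*x^5*y + (-27:K)*x^5*z^2 + (18:K)*x^5*z + (9:K)*x^5 + (81:K)*x^4*y^5 + (-108:K)*x^4*y^4 + (-81:K)*x^4*y^3*z^2 + (54:K)*x^4*y^3*z + (9:K)*x^4*y^3 + (-81:K)*x^4*y^2*z^3 + (81:K)*x^4*y^2*z^2 + (9:K)*x^4*y^2*z + (27:K)*x^4*y^2 + (54:K)*x^4*y*z^3 + (9:K)*x^4*y*z^2 + (-48:K)*x^4*y*z + (-6:K)*x^4*y + (81:K)*x^4*z^5 + (-108:K)*x^4*z^4 + (9:K)*x^4*z^3 + (27:K)*x^4*z^2 + (-6:K)*x^4*z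 + (-3:K)*x^4 + (-81:K)*x^3*y^6 + (-81:K)*x^3*y^5*z + (81:K)*x^3*y^5 + (81:K)*x^3*y^4*z^2 + (54:K)*x^3*y^4*z + (27:K)*x^3*y^4 + (243:K)*x^3*y^3*z^3 + (-270:K)*x^3*y^3*z^2 + (9:K)*x^3*y^3*z + (6:K)*x^3*y^3 + (81:K)*x^3*y^2*z^4 + (-270:K)*x^3*y^2*z^3 + (81:K)*x^3*y^2*z^2 + (60:K)*x^3*y^2*z + (-9:K)*x^3*y^2 + (-81:K)*x^3*y*z^5 + (54:K)*x^3*y*z^4 + (9:K)*x^3*y*z^3 + (60:K)*x^3*y*z^2 + (-35:K)*x^3*y*z + (-19:K)*x^3*y + (-81:K)*x^3*z^6 + (81:K)*x^3*z^5 + (27:K)*x^3*z^4 + (6:K)*x^3*z^3 + (-9:K)*x^3*z^2 + (-19:K)*x^3*z + (-5:K)*x^3 + (81:K)*x^2*y^7 + (162:K)*x^2*y^6*z + (-162:K)*x^2*y^6 + (-216:K)*x^2*y^5*z + (36:K)*x^2*y^5 + (-243:K)*x^2*y^4*z^3 + (243:K)*x^2*y^4*z^2 + (-9:K)*x^2*y^4*z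 + (45:K)*x^2*y^4 + (-243:K)*x^2*y^3*z^4 + (459:K)*x^2*y^3*z^3 + (-234:K)*x^2*y^3*z^2 + (51:K)*x^2*y^3*z + (28:K)*x^2*y^3 + (243:K)*x^2*y^2*z^4 + (-234:K)*x^2*y^2*z^3 + (-27:K)*x^2*y^2*z^2 + (38:K)*x^2*y^2*z + (-16:K)*x^2*y^2 + (162:K)*x^2*y*z^6 + (-216:K)*x^2*y*z^5 + (-9:K)*x^2*y*z^4 + (51:K)*x^2*y*z^3 + (38:K)*x^2*y*z^2 + (-17:K)*x^2*y*z + (-11:K)*x^2*y + (81:K)*x^2*z^7 + (-162:K)*x^2*z^6 + (36:K)*x^2*z^5 + (45:K)*x^2*z^4 + (28:K)*x^2*z^3 + (-16:K)*x^2*z^2 + (-11:K)*x^2*z + (-1:K)*x^2 + (-81:K)*x*y^8 + (-243:K)*x*y^7*z + (243:K)*x*y^7 + (-81:K)*x*y^6*z^2 + (486:K)*x*y^6*z + (-225:K)*x*y^6 + (243:K)*x*y^5*z^3 + (-135:K)*x*y^5*z^2 + (-171:K)*x*y^5*z + (63:K)*x*y^5 + (486:K)*x*y^4*z^4 + (-999:K)*x*y^4*z^3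 + (504:K)*x*y^4*z^2 + (-75:K)*x*y^4*z + (-25:K)*x*y^4 + (243:K)*x*y^3*z^5 + (-999:K)*x*y^3*z^4 + (1053:K)*x*y^3*z^3 + (-246:K)*x*y^3*z^2 + (-81:K)*x*y^3*z + (18:K)*x*y^3 + (-81:K)*x*y^2*z^6 + (-135:K)*x*y^2*z^5 + (504:K)*x*y^2*z^4 + (-246:K)*x*y^2*z^3 + (-100:K)*x*y^2*z^2 + (67:K)*x*y^2*z + (9:K)*x*y^2 + (-243:K)*x*y*z^7 + (486:K)*x*y*z^6 + (-171:K)*x*y*z^5 + (-75:K)*x*y*z^4 + (-81:K)*x*y*z^3 + (67:K)*x*y*z^2 + (23:K)*x*y*z + (-2:K)*x*y + (-81:K)*x*z^8 + (243:K)*x*z^7 + (-225:K)*x*z^6 + (63:K)*x*z^5 + (-25:K)*x*z^4 + (18:K)*x*z^3 + (9:K)*x*z^2 + (-2:K)*x*z + (-81:K)*y^8*z + (-243:K)*y^7*z^2 + (243:K)*y^7*z + (-81:K)*y^7 + (405:K)*y^6*z^2 + (-549:K)*y^6*z + (243:K)*y^6 + (405:K)*y^5*z^4 + (-405:K)*y^5*z^3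 + (-234:K)*y^5*z^2 + (630:K)*y^5*z + (-297:K)*y^5 + (405:K)*y^4*z^5 + (-1080:K)*y^4*z^4 + (1296:K)*y^4*z^3 + (-468:K)*y^4*z^2 + (-376:K)*y^4*z + (204:K)*y^4 + (-405:K)*y^3*z^5 + (1296:K)*y^3*z^4 + (-1641:K)*y^3*z^3 + (908:K)*y^3*z^2 + (-9:K)*y^3*z + (-168:K)*y^3 + (-243:K)*y^2*z^7 + (405:K)*y^2*z^6 + (-234:K)*y^2*z^5 + (-468:K)*y^2*z^4 + (1340:K)*y^2*z^3 + (-842:K)*y^2*z^2 + (-56:K)*y^2*z + (99:K)*y^2 + (-81:K)*y*z^8 + (243:K)*y*z^7 + (-549:K)*y*z^6 + (630:K)*y*z^5 + (-376:K)*y*z^4 + (-9:K)*y*z^3 + (376:K)*y*z^2 + (-153:K)*y*z + (-80:K)*y + (-81:K)*z^7 + (243:K)*z^6 + (-297:K)*z^5 + (204:K)*z^4 + (-168:K)*z^3 + (531:K)*z^2 + (-80:K)*z) * h1 - ((81:K)*y^8 + (324:K)*y^7*z + (-324:K)*y^7 + (243:K)*y^6*z^2 + (-891:K)*y^6*z +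 (549:K)*y^6 + (-405:K)*y^5*z^3 + (918:K)*y^5*z + (-513:K)*y^5 + (-729:K)*y^4*z^4 + (1782:K)*y^4*z^3 + (-1080:K)*y^4*z^2 + (-324:K)*y^4*z + (370:K)*y^4 + (-405:K)*y^3*z^5 + (1782:K)*y^3*z^4 + (-2799:K)*y^3*z^3 + (1647:K)*y^3*z^2 + (38:K)*y^3*z + (-263:K)*y^3 + (243:K)*y^2*z^6 + (-1080:K)*y^2*z^4 + (1647:K)*y^2*z^3 + (-1077:K)*y^2*z^2 + (86:K)*y^2*z + (180:K)*y^2 + (324:K)*y*z^7 + (-891:K)*y*z^6 + (918:K)*y*z^5 + (-324:K)*y*z^4 + (-394:K)*y*z^3 + (518:K)*y*z^2 + (-71:K)*y*z + (-80:K)*y + (81:K)*z^8 + (-324:K)*z^7 + (549:K)*z^6 + (-513:K)*z^5 + (370:K)*z^4 + (-263:K)*z^3 + (180:K)*z^2 + (-512:K)*z + (80:K)) * h2 - ((432:K)*z^3 + (-432:K)*z^2 + (-432:K)*z + (784:K)) * h3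

private theorem trib_aux (p : ℕ) (hp : p.Prime) (hp2 : p ≠ 2) (hp11 : p ≠ 11) (hp19 : p ≠ 19)
    (K : Type) [Field K] [Algebra (ZMod p) K] [IsAlgClosed K] [CharP K p]
    (h : p ∣ trib (p - 1)) :
    ∃ a b c : ZMod p, a ≠ b ∧ a ≠ c ∧ b ≠ c ∧
      (X ^ 3 - X ^ 2 - X - 1 : (ZMod p)[X]) = (X - C a) * (X - C b) * (X - C c) := by
  haveI := Fact.mk hp
  haveI : NeZero p := ⟨hp.ne_zero⟩
  have hi : Function.Injective (algebraMap (ZMod p) K) := (algebraMap (ZMod p) K).injective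
  -- divisibility helpers
  have hpd : ∀ n : ℕ, (n : K) = 0 → p ∣ n := by
    intro n hn
    have hz : ((n : ℕ) : ZMod p) = 0 := by
      apply hi; rw [map_natCast, map_zero]; exact hn
    exact (ZMod.natCast_eq_zero_iff n p).mp hz
  have hprim : ∀ q : ℕ, q.Prime → p ∣ q → p = q :=
    fun q hq hpq => (Nat.prime_dvd_prime_iff_eq hp hq).mp hpq
  have h22 : (22 : K) ≠ 0 := by
    intro h0
    have hd : p ∣ 2 * 11 := by norm_num; exact hpd 22 (by exact_mod_cast h0)
    rcases hp.dvd_mul.mp hd with hq | hq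
    · exact hp2 (hprim 2 Nat.prime_two hq)
    · exact hp11 (hprim 11 (by norm_num) hq)
  have h704 : (704 : K) ≠ 0 := by
    intro h0
    have hd : p ∣ 2 ^ 6 * 11 := by norm_num; exact hpd 704 (by exact_mod_cast h0)
    rcases hp.dvd_mul.mp hd with hq | hq
    · exact hp2 (hprim 2 Nat.prime_two (hp.dvd_of_dvd_pow hq))
    · exact hp11 (hprim 11 (by norm_num) hq)
  have h836 : (836 : K) ≠ 0 := by
    intro h0
    have hd : p ∣ 2 ^ 2 * (11 * 19) := by norm_num; exact hpd 836 (by exact_mod_cast h0)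
    rcases hp.dvd_mul.mp hd with hq | hq
    · exact hp2 (hprim 2 Nat.prime_two (hp.dvd_of_dvd_pow hq))
    · rcases hp.dvd_mul.mp hq with hq' | hq'
      · exact hp11 (hprim 11 (by norm_num) hq')
      · exact hp19 (hprim 19 (by norm_num) hq')
  -- get the three roots
  obtain ⟨α, hαroot⟩ := IsAlgClosed.exists_root (X ^ 3 - X ^ 2 - X - 1 : K[X]) (by
    have hd : (X ^ 3 - X ^ 2 - X - 1 : K[X]).degree = 3 := by compute_degree!
    rw [hd]; decide)
  have hfα : α ^ 3 - α ^ 2 - α - 1 = 0 := by simpa using hαroot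
  obtain ⟨β, hβroot⟩ := IsAlgClosed.exists_root
      (X ^ 2 + C (α - 1) * X + C (α ^ 2 - α - 1) : K[X]) (by
    have hd : (X ^ 2 + C (α - 1) * X + C (α ^ 2 - α - 1) : K[X]).degree = 2 := by compute_degree!
    rw [hd]; decide)
  have hq : β ^ 2 + (α - 1) * β + (α ^ 2 - α - 1) = 0 := by simpa using hβroot
  obtain ⟨γ, hγw⟩ : ∃ g : K, g = 1 - α - β := ⟨1 - α - β, rfl⟩
  have h1 : α + β + γ = 1 := by linear_combination hγw
  have h2 : α * β + α * γ + β * γ = -1 := by linear_combination (α + β) * hγw - hq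
  have h3 : α * β * γ = 1 := by linear_combination (α * β) * hγw - α * hq + hfα
  have hfβ : β ^ 3 - β ^ 2 - β - 1 = 0 := by linear_combination (β^2) * h1 - β * h2 + h3
  have hfγ : γ ^ 3 - γ ^ 2 - γ - 1 = 0 := by linear_combination (γ^2) * h1 - γ * h2 + h3
  -- distinctness
  have hαβ : α ≠ β := by
    intro hab
    apply h22
    have hfp : 3 * α ^ 2 - 2 * α - 1 = 0 := by rw [← hab] at hq; linear_combination hq
    linear_combination ((12:K) * α - 23) * hfα + ((-4:K) * α ^ 2 + 9 * α + 1) * hfp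
  have hαγ : α ≠ γ := by
    intro hac
    apply h22
    have hb2 : β = 1 - 2 * α := by linear_combination hac + hγw
    have hfp : 3 * α ^ 2 - 2 * α - 1 = 0 := by linear_combination hq - (β - α) * hb2
    linear_combination ((12:K) * α - 23) * hfα + ((-4:K) * α ^ 2 + 9 * α + 1) * hfp
  have hβγ : β ≠ γ := by
    intro hbc
    apply h22
    have h2b : 2 * β = 1 - α := by linear_combination hbc + hγw
    have hfp5 : 3 * α ^ 2 - 2 * α - 5 = 0 := by linear_combination 4 * hq - (2 * β + α - 1) * h2b
    linear_combination ((-6:K) * α - 17) * hfα + ((2:K) * α ^ 2 + 5 * α - 1) * hfp5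
  -- Frobenius facts
  have hfrob : ∀ x : K, x ^ 3 - x ^ 2 - x - 1 = 0 → (x ^ p) ^ 3 - (x ^ p) ^ 2 - x ^ p - 1 = 0 := by
    intro x hx
    have h0 : (x ^ 3 - x ^ 2 - x - 1) ^ p = 0 := by rw [hx]; exact zero_pow hp.ne_zero
    rw [sub_pow_char, sub_pow_char, sub_pow_char, one_pow, ← pow_mul x 3 p, ← pow_mul x 2 p,
      mul_comm 3 p, mul_comm 2 p, pow_mul, pow_mul] at h0
    exact h0
  have hinj : ∀ u v : K, u ^ p = v ^ p → u = v := by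
    intro u v huv
    have h0 : (u - v) ^ p = 0 := by rw [sub_pow_char, huv, sub_self]
    exact sub_eq_zero.mp ((pow_eq_zero_iff hp.ne_zero).mp h0)
  have hroots : ∀ x : K, x ^ 3 - x ^ 2 - x - 1 = 0 → x = α ∨ x = β ∨ x = γ := by
    intro x hx
    have hprod : (x - α) * (x - β) * (x - γ) = 0 := by
      linear_combination hx - (x^2) * h1 + x * h2 - h3
    rcases mul_eq_zero.mp hprod with h' | h'
    · rcases mul_eq_zero.mp h' with h'' | h''
      · exact Or.inl (sub_eq_zero.mp h'')
      · exact Or.inr (Or.inl (sub_eq_zero.mp h''))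
    · exact Or.inr (Or.inr (sub_eq_zero.mp h'))
  have hmem : ∀ x : K, x ^ p = x → ∃ c : ZMod p, algebraMap (ZMod p) K c = x := by
    intro x hx
    by_contra hc
    push_neg at hc
    classical
    have hqd : (X ^ p - X : K[X]).natDegree = p := by
      rw [natDegree_sub_eq_left_of_natDegree_lt, natDegree_X_pow]
      rw [natDegree_X_pow, natDegree_X]; exact hp.one_lt
    have hq0 : (X ^ p - X : K[X]) ≠ 0 := by
      intro h0
      rw [h0, natDegree_zero] at hqd
      exact hp.ne_zero hqd.symm
    have hxs : x ∉ Finset.univ.image (algebraMap (ZMod p) K) := by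
      simp only [Finset.mem_image, Finset.mem_univ, true_and]
      rintro ⟨c, hcx⟩
      exact hc c hcx
    have hsub : (insert x (Finset.univ.image (algebraMap (ZMod p) K))).val
        ⊆ (X ^ p - X : K[X]).roots := by
      intro y hy
      rw [Polynomial.mem_roots hq0]
      simp only [IsRoot, eval_sub, eval_pow, eval_X]
      rw [sub_eq_zero]
      rcases Finset.mem_insert.mp (Finset.mem_val.mp hy) with h' | h'
      · rw [h']; exact hx
      · obtain ⟨c, -, rfl⟩ := Finset.mem_image.mp h'
        rw [← map_pow, ZMod.pow_card]
    have hle := Polynomial.card_le_degree_of_subset_roots hsub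
    rw [Finset.card_insert_of_notMem hxs, Finset.card_image_of_injective _ hi,
      Finset.card_univ, ZMod.card, hqd] at hle
    omega
  -- closed form for the Tribonacci sequence
  have key : ∀ n : ℕ, (44:K) * (trib n : K)
      = (3*β^2 - 2*β - 1) * (3*γ^2 - 2*γ - 1) * α ^ (n+1)
      + (3*γ^2 - 2*γ - 1) * (3*α^2 - 2*α - 1) * β ^ (n+1)
      + (3*α^2 - 2*α - 1) * (3*β^2 - 2*β - 1) * γ ^ (n+1) := by
    have key3 : ∀ n : ℕ,
        ((44:K) * (trib n : K)
          = (3*β^2 - 2*β - 1) * (3*γ^2 - 2*γ - 1) * α ^ (n+1)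
          + (3*γ^2 - 2*γ - 1) * (3*α^2 - 2*α - 1) * β ^ (n+1)
          + (3*α^2 - 2*α - 1) * (3*β^2 - 2*β - 1) * γ ^ (n+1))
        ∧ ((44:K) * (trib (n+1) : K)
          = (3*β^2 - 2*β - 1) * (3*γ^2 - 2*γ - 1) * α ^ (n+2)
          + (3*γ^2 - 2*γ - 1) * (3*α^2 - 2*α - 1) * β ^ (n+2)
          + (3*α^2 - 2*α - 1) * (3*β^2 - 2*β - 1) * γ ^ (n+2))
        ∧ ((44:K) * (trib (n+2) : K)
          = (3*β^2 - 2*β - 1) * (3*γ^2 - 2*γ - 1) * α ^ (n+3)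
          + (3*γ^2 - 2*γ - 1) * (3*α^2 - 2*α - 1) * β ^ (n+3)
          + (3*α^2 - 2*α - 1) * (3*β^2 - 2*β - 1) * γ ^ (n+3)) := by
      intro n
      induction n with
      | zero =>
        refine ⟨?_, ?_, ?_⟩
        · rw [show trib 0 = 0 from rfl]
          push_cast
          linear_combination (-((9:K)*α*β^2*γ + (9:K)*α*β*γ^2 + (-12:K)*α*β*γ + (-3:K)*α*β + (-3:K)*α*γ + (9:K)*β^2*γ^2 + (6:K)*β*γ + (1:K))) * h1 - ((-9:K)*β^2*γ + (-9:K)*β*γ^2 + (9:K)*β*γ + (1:K)) * h2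
        · rw [show trib (0+1) = 1 from rfl]
          push_cast
          linear_combination (-((27:K)*α*β^2*γ^2 + (-12:K)*α*β^2*γ + (-6:K)*α*β^2 + (-12:K)*α*β*γ^2 + (4:K)*α*β*γ + (2:K)*α*β + (-6:K)*α*γ^2 + (2:K)*α*γ + (1:K)*α + (27:K)*β^2*γ^3 + (-12:K)*β^2*γ^2 + (-6:K)*β^2*γ + (21:K)*β*γ^2 + (-10:K)*β*γ + (-5:K)*β + (27:K)*γ^2 + (-5:K)*γ + (1:K))) * h1 - ((-27:K)*β^2*γ^2 + (12:K)*β^2*γ + (6:K)*β^2 + (-27:K)*β*γ^3 + (39:K)*β*γ^2 + (-6:K)*β*γ + (-6:K)*β + (6:K)*γ^2 + (-33:K)*γ + (6:K)) * h2 - ((27:K)*γ^3 + (-27:K)*γ^2 + (-27:K)*γ + (49:K)) * h3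
        · rw [show trib (0+2) = 1 from rfl]
          push_cast
          linear_combination (-((9:K)*α^2*β^2*γ^2 + (-6:K)*α^2*β^2*γ + (-3:K)*α^2*β^2 + (-6:K)*α^2*β*γ^2 + (4:K)*α^2*β*γ + (2:K)*α^2*β + (-3:K)*α^2*γ^2 + (2:K)*α^2*γ + (1:K)*α^2 + (21:K)*α*β^2*γ^2 + (-7:K)*α*β^2*γ + (-5:K)*α*β^2 + (-7:K)*α*β*γ^2 + (1:K)*α*β + (-5:K)*α*γ^2 + (1:K)*α*γ + (1:K)*α + (27:K)*β^2*γ^3 + (-14:K)*β^2*γ^2 + (-5:K)*β^2*γ + (1:K)*β^2 + (22:K)*β*γ^2 + (-10:K)*β*γ + (-6:K)*β + (28:K)*γ^2 + (-6:K)*γ + (1:K))) * h1 - ((-27:K)*β^2*γ^2 + (11:K)*β^2*γ + (7:K)*β^2 + (-27:K)*β*γ^3 + (38:K)*β*γ^2 + (-4:K)*β*γ + (-7:K)*β + (7:K)*γ^2 + (-34:K)*γ + (6:K)) * h2 - ((27:K)*γ^3 + (-27:K)*γ^2 + (-27:K)*γ + (49:K)) * h3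
      | succ k ih =>
        obtain ⟨i0, i1, i2⟩ := ih
        refine ⟨i1, i2, ?_⟩
        rw [show trib (k+1+2) = trib (k+2) + trib (k+1) + trib k from rfl]
        push_cast
        linear_combination i0 + i1 + i2
          - ((3*β^2 - 2*β - 1) * (3*γ^2 - 2*γ - 1) * α ^ (k+1)) * hfα
          - ((3*γ^2 - 2*γ - 1) * (3*α^2 - 2*α - 1) * β ^ (k+1)) * hfβ
          - ((3*α^2 - 2*α - 1) * (3*β^2 - 2*β - 1) * γ ^ (k+1)) * hfγ
    exact fun n => (key3 n).1
  -- the hypothesis in K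
  have hT : ((trib (p-1) : ℕ) : K) = 0 := by
    have hz : ((trib (p-1) : ℕ) : ZMod p) = 0 := (ZMod.natCast_eq_zero_iff _ p).mpr h
    have := congrArg (algebraMap (ZMod p) K) hz
    rwa [map_natCast, map_zero] at this
  have hP : (3*β^2 - 2*β - 1) * (3*γ^2 - 2*γ - 1) * α ^ p
      + (3*γ^2 - 2*γ - 1) * (3*α^2 - 2*α - 1) * β ^ p
      + (3*α^2 - 2*α - 1) * (3*β^2 - 2*β - 1) * γ ^ p = 0 := by
    have h0 := key (p-1)
    rw [Nat.sub_add_cancel hp.one_le, hT, mul_zero] at h0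
    exact h0.symm
  -- conclusion in the split case
  have final : α ^ p = α → β ^ p = β → γ ^ p = γ →
      ∃ a b c : ZMod p, a ≠ b ∧ a ≠ c ∧ b ≠ c ∧
        (X ^ 3 - X ^ 2 - X - 1 : (ZMod p)[X]) = (X - C a) * (X - C b) * (X - C c) := by
    intro hA hB hC
    obtain ⟨a, ha⟩ := hmem α hA
    obtain ⟨b, hb⟩ := hmem β hB
    obtain ⟨c, hc⟩ := hmem γ hC
    have ea : a + b + c = 1 := hi (by rw [map_add, map_add, ha, hb, hc, map_one]; exact h1)
    have eb : a * b + a * c + b * c = -1 := hi (by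
      rw [map_add, map_add, map_mul, map_mul, map_mul, ha, hb, hc, map_neg, map_one]; exact h2)
    have ec : a * b * c = 1 := hi (by rw [map_mul, map_mul, ha, hb, hc, map_one]; exact h3)
    refine ⟨a, b, c, ?_, ?_, ?_, ?_⟩
    · exact fun hab => hαβ (by rw [← ha, ← hb, hab])
    · exact fun hac => hαγ (by rw [← ha, ← hc, hac])
    · exact fun hbc => hβγ (by rw [← hb, ← hc, hbc])
    · have expand : (X - C a) * (X - C b) * (X - C c)
          = X^3 - C (a+b+c) * X^2 + C (a*b + a*c + b*c) * X - C (a*b*c) := by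
        simp only [map_add, map_mul]
        ring
      rw [expand, ea, eb, ec, map_one, map_neg, map_one]
      ring
  -- case analysis on the Frobenius permutation of the roots
  rcases hroots (α ^ p) (hfrob α hfα) with hA | hA | hA <;>
    rcases hroots (β ^ p) (hfrob β hfβ) with hB | hB | hB <;>
      rcases hroots (γ ^ p) (hfrob γ hfγ) with hC | hC | hC
  all_goals try exact final hA hB hC
  all_goals try exact absurd (hinj α β (hA.trans hB.symm)) hαβ
  all_goals try exact absurd (hinj α γ (hA.trans hC.symm)) hαγ
  all_goals try exact absurd (hinj β γ (hB.trans hC.symm)) hβγ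
  -- five genuine non-split cases remain
  · -- (α, γ, β) : transposition fixing α
    rw [hA, hB, hC] at hP
    exact (no_trans h836 α β γ hfα h1 h2 h3 (by linear_combination hP)).elim
  · -- (β, α, γ) : transposition fixing γ
    rw [hA, hB, hC] at hP
    exact (no_trans h836 γ α β hfγ (by linear_combination h1) (by linear_combination h2)
        (by linear_combination h3) (by linear_combination hP)).elim
  · -- (β, γ, α) : 3-cycle
    rw [hA, hB, hC] at hP
    exact (no_cycle h704 α β γ h1 h2 h3 (by linear_combination hP)).elim
  · -- (γ, α, β) : 3-cycle
    rw [hA, hB, hC] at hP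
    exact (no_cycle h704 α γ β (by linear_combination h1) (by linear_combination h2)
        (by linear_combination h3) (by linear_combination hP)).elim
  · -- (γ, β, α) : transposition fixing β
    rw [hA, hB, hC] at hP
    exact (no_trans h836 β γ α hfβ (by linear_combination h1) (by linear_combination h2)
        (by linear_combination h3) (by linear_combination hP)).elim

/-- For p prime, p ∉ {2, 11, 19}: if p divides T_{p-1}, then x³-x²-x-1 splits
into three distinct linear factors over 𝔽_p. -/
theorem three_distinct_roots_of_dvd_trib
    (p : ℕ) (hp : p.Prime) (hp2 : p ≠ 2) (hp11 : p ≠ 11) (hp19 : p ≠ 19)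
    (h : p ∣ trib (p - 1)) :
    ∃ a b c : ZMod p, a ≠ b ∧ a ≠ c ∧ b ≠ c ∧
      (X ^ 3 - X ^ 2 - X - 1 : (ZMod p)[X]) = (X - C a) * (X - C b) * (X - C c) := by
  haveI := Fact.mk hp
  exact trib_aux p hp hp2 hp11 hp19 (AlgebraicClosure (ZMod p)) h
end
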